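/- arXiv:1710.10840 — 5 statements merged into one kernel-verified Lean document; each statement's English description precedes it below -/
import Mathlib

section
/- Let R be a commutative ring, N and M R-modules, and n ≥ 1 an integer. Then Tor_q^R(N, M) = 0 for all 1 ≤ q ≤ n if and only if for every injective R-module Q one has Ext^q_R(M, Hom_R(N, Q)) = 0 for all 1 ≤ q ≤ n. -/
/-
If `P → M` is a projective resolution, the tensor-hom adjunction identifies the complex
`Hom(P, Hom(N, Q))` with `Hom(N ⊗ P, Q)`, whose cohomology is therefore `Ext^q(M, Hom(N, Q))`.
For `Q` injective, `Hom(-, Q)` is exact and so commutes with homology, giving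
`Ext^q(M, Hom(N, Q)) ≅ Hom(Tor_q(N, M), Q)` in every degree. Since every module embeds into an
injective one, a module vanishes iff it admits no nonzero map to any injective module.
-/

open CategoryTheory Limits Opposite

universe u v w

noncomputable section

section LinearYoneda

variable (R : Type u) [Ring R] {C : Type w} [Category.{v} C] [Abelian C] [Linear R C]

namespace CategoryTheory

instance preservesLimits_linearYoneda_obj (Q : C) :
    PreservesLimits ((linearYoneda R C).obj Q) := by
  have hforget : (linearYoneda R C).obj Q ⋙ forget (ModuleCat R) = yoneda.obj Q :=
    Functor.congr_obj (whiskering_linearYoneda R C) Q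
  have : PreservesLimits ((linearYoneda R C).obj Q ⋙ forget (ModuleCat R)) := by
    rw [hforget]; infer_instance
  exact preservesLimits_of_reflects_of_preserves _ (forget (ModuleCat R))

instance preservesEpimorphisms_linearYoneda_obj (Q : C) [Injective Q] :
    ((linearYoneda R C).obj Q).PreservesEpimorphisms where
  preserves f _ :=
    (ModuleCat.epi_iff_surjective _).mpr fun (g : _ ⟶ Q) => Injective.factors g f.unop

instance preservesHomology_linearYoneda_obj_rightOp (Q : C) [Injective Q] :
    ((linearYoneda R C).obj Q).rightOp.PreservesHomology := by
  have := ((linearYoneda R C).obj Q).preservesHomology_of_preservesEpis_and_kernels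
  have := ((linearYoneda R C).obj Q).preservesFiniteLimits_of_preservesHomology
  have := ((linearYoneda R C).obj Q).preservesFiniteColimits_of_preservesHomology
  have := preservesFiniteLimits_rightOp ((linearYoneda R C).obj Q)
  have := preservesFiniteColimits_rightOp ((linearYoneda R C).obj Q)
  infer_instance

end CategoryTheory

def ChainComplex.linearYonedaObjHomologyIso {α : Type*} [AddRightCancelSemigroup α] [One α]
    (K : ChainComplex C α) (Q : C) [Injective Q] (n : α) :
    (K.linearYonedaObj R Q).homology n ≅ ModuleCat.of R (K.homology n ⟶ Q) :=
  HomologicalComplex.homologyUnop _ n ≪≫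
    (ShortComplex.mapHomologyIso (K.sc n) ((linearYoneda R C).obj Q).rightOp).unop.symm

end LinearYoneda

section TensorHom

open MonoidalCategory

variable {R : Type u} [CommRing R]

def ModuleCat.homLinearMapEquivTensorHom (N Q X : ModuleCat.{u} R) :
    (X ⟶ ModuleCat.of R (N →ₗ[R] Q)) ≃ₗ[R] (N ⊗ X ⟶ Q) :=
  ModuleCat.homLinearEquiv ≪≫ₗ LinearMap.lflip ≪≫ₗ
    TensorProduct.lift.equiv (RingHom.id R) N X Q ≪≫ₗ (ModuleCat.homLinearEquiv (M := N ⊗ X)).symm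

def ChainComplex.linearYonedaObjTensorIso {α : Type*} [AddRightCancelSemigroup α] [One α]
    (N Q : ModuleCat.{u} R) (K : ChainComplex (ModuleCat.{u} R) α) :
    K.linearYonedaObj R (ModuleCat.of R (N →ₗ[R] Q)) ≅
      ChainComplex.linearYonedaObj
        ((((tensoringLeft _).obj N).mapHomologicalComplex _).obj K) R Q :=
  HomologicalComplex.Hom.isoOfComponents
    (fun i => (ModuleCat.homLinearMapEquivTensorHom N Q (K.X i)).toModuleIso)
    (by
      intro i j _
      ext f
      apply ModuleCat.hom_ext
      exact TensorProduct.ext' fun _ _ => rfl)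

def ModuleCat.extLinearMapIsoHomTor (N M Q : ModuleCat.{u} R) [Injective Q] (q : ℕ) :
    ((Ext R (ModuleCat.{u} R) q).obj (op M)).obj (ModuleCat.of R (N →ₗ[R] Q)) ≅
      ModuleCat.of R (((Tor (ModuleCat.{u} R) q).obj N).obj M ⟶ Q) :=
  let P := CategoryTheory.projectiveResolution M
  P.isoExt q _ ≪≫
    (HomologicalComplex.homologyFunctor _ _ q).mapIso (P.complex.linearYonedaObjTensorIso N Q) ≪≫
    ChainComplex.linearYonedaObjHomologyIso R _ Q q ≪≫
    ((linearYoneda R _).obj Q).mapIso (P.isoLeftDerivedObj _ q).op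

end TensorHom

end

theorem Module.subsingleton_iff_forall_injective_subsingleton_linearMap {R : Type u}
    [Ring R] (T : Type u) [AddCommGroup T] [Module R T] :
    Subsingleton T ↔ ∀ (Q : Type u) [AddCommGroup Q] [Module R Q], Module.Injective R Q →
      Subsingleton (T →ₗ[R] Q) := by
  refine ⟨fun _ _ _ _ _ => inferInstance, fun h => ?_⟩
  let J : ModuleCat R := CategoryTheory.Injective.under (ModuleCat.of R T)
  let ι : ModuleCat.of R T ⟶ J := CategoryTheory.Injective.ι _
  have hι : Function.Injective ι := (ModuleCat.mono_iff_injective _).mp inferInstance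
  have : CategoryTheory.Injective (ModuleCat.of R J) :=
    inferInstanceAs (CategoryTheory.Injective (CategoryTheory.Injective.under _))
  have := h J (Module.injective_module_of_injective_object R J)
  have hzero : ι.hom = 0 := Subsingleton.elim _ _
  exact ⟨fun a b => hι (by simp [hzero])⟩

theorem stmt2_general (R : Type) [CommRing R]
    (N M : Type) [AddCommGroup N] [Module R N] [AddCommGroup M] [Module R M]
    (n : ℕ) :
    (∀ q, 1 ≤ q → q ≤ n →
        Subsingleton
          (((Tor (ModuleCat R) q).obj (ModuleCat.of R N)).obj (ModuleCat.of R M))) ↔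
      (∀ (Q : Type) [AddCommGroup Q] [Module R Q], Module.Injective R Q →
        ∀ q, 1 ≤ q → q ≤ n →
          Subsingleton
            (((Ext R (ModuleCat R) q).obj
                (Opposite.op (ModuleCat.of R M))).obj (ModuleCat.of R (N →ₗ[R] Q)))) := by
  have ext_iff_tor (Q : Type) [AddCommGroup Q] [Module R Q] [Module.Injective R Q] (q : ℕ) :
      Subsingleton (((Ext R (ModuleCat R) q).obj (op (ModuleCat.of R M))).obj
          (ModuleCat.of R (N →ₗ[R] Q))) ↔
        Subsingleton
          (((Tor (ModuleCat R) q).obj (ModuleCat.of R N)).obj (ModuleCat.of R M) →ₗ[R] Q) :=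
    have := Module.injective_object_of_injective_module R Q
    ((ModuleCat.extLinearMapIsoHomTor (.of R N) (.of R M) (.of R Q) q).toLinearEquiv ≪≫ₗ
      ModuleCat.homLinearEquiv).toEquiv.subsingleton_congr
  constructor
  · intro hTor Q _ _ _ q hq hqn
    have := hTor q hq hqn
    exact (ext_iff_tor Q q).mpr inferInstance
  · intro hExt q hq hqn
    exact (Module.subsingleton_iff_forall_injective_subsingleton_linearMap _).mpr
      fun Q _ _ _ => (ext_iff_tor Q q).mp (hExt Q ‹_› q hq hqn)

/-- Let `R` be a commutative ring, `N` and `M` two `R`-modules and `n ≥ 1`.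
Then `Tor_q^R(N, M) = 0` for all `1 ≤ q ≤ n` if and only if for every injective `R`-module `Q`
one has `Ext^q_R(M, Hom_R(N, Q)) = 0` for all `1 ≤ q ≤ n`. -/
theorem stmt2 (R : Type) [CommRing R]
    (N M : Type) [AddCommGroup N] [Module R N] [AddCommGroup M] [Module R M]
    (n : ℕ) (hn : 1 ≤ n) :
    (∀ q, 1 ≤ q → q ≤ n →
        Subsingleton
          (((Tor (ModuleCat R) q).obj (ModuleCat.of R N)).obj (ModuleCat.of R M))) ↔
      (∀ (Q : Type) [AddCommGroup Q] [Module R Q], Module.Injective R Q →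
        ∀ q, 1 ≤ q → q ≤ n →
          Subsingleton
            (((Ext R (ModuleCat R) q).obj
                (Opposite.op (ModuleCat.of R M))).obj (ModuleCat.of R (N →ₗ[R] Q)))) :=
  stmt2_general R N M n
end

section
/- Let R be a commutative ring and (r_1,…,r_k,s_1,…,s_l) a regular sequence in R such that the subsequence (s_1,…,s_l) is itself a regular sequence. Let I = (r_1,…,r_k) and J = (s_1,…,s_l) be the ideals generated by the two parts. Then I ∩ J = I·J. -/
/-!
Induct on `ss`, adding one element `s` at a time. If `s` is a nonzerodivisor modulo `I + J` and
`I ∩ J = I J`, write `x ∈ I ∩ (J + (s))` as `x = y + a s` with `y ∈ J`. Then `s a ∈ I + J`, so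
`a = i + j` with `i ∈ I`, `j ∈ J`; now `x - i s = y + j s ∈ I ∩ J = I J` and `i s ∈ I (s)`.
-/

open RingTheory.Sequence

namespace Ideal

variable {R : Type*} [CommRing R]

theorem inf_sup_span_singleton_eq_mul {I J : Ideal R} {s : R} (hIJ : I ⊓ J = I * J)
    (hs : IsSMulRegular (R ⧸ (I ⊔ J)) s) :
    I ⊓ (J ⊔ span {s}) = I * (J ⊔ span {s}) := by
  refine le_antisymm ?_ mul_le_inf
  rintro x ⟨hxI, hxJs⟩
  obtain ⟨y, hyJ, _, has, rfl⟩ := Submodule.mem_sup.mp hxJs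
  obtain ⟨a, rfl⟩ := mem_span_singleton'.mp has
  have hsa : s * a ∈ I ⊔ J := by
    have hsa_eq : s * a = (y + a * s) - y := by ring
    exact hsa_eq ▸ sub_mem (mem_sup_left hxI) (mem_sup_right hyJ)
  obtain ⟨i, hiI, j, hjJ, rfl⟩ :=
    Submodule.mem_sup.mp (mem_of_isSMulRegular_quotient_of_smul_mem hs hsa)
  have hisI : i * s ∈ I := I.mul_mem_right s hiI
  have hrest : y + j * s ∈ I * J := by
    have hrest_eq : y + j * s = (y + (i + j) * s) - i * s := by ring
    rw [← hIJ]
    exact ⟨hrest_eq ▸ sub_mem hxI hisI, add_mem hyJ (J.mul_mem_right s hjJ)⟩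
  have hsplit : y + (i + j) * s = (y + j * s) + i * s := by ring
  rw [hsplit]
  exact add_mem (mul_mono_right le_sup_left hrest)
    (mul_mem_mul hiI (mem_sup_right (mem_span_singleton_self s)))

theorem ofList_inf_ofList_eq_mul_of_isWeaklyRegular_append {rs ss : List R}
    (hreg : IsWeaklyRegular R (rs ++ ss)) : ofList rs ⊓ ofList ss = ofList rs * ofList ss := by
  induction ss using List.reverseRecOn with
  | nil => simp
  | append_singleton ss s ih =>
    rw [← List.append_assoc, isWeaklyRegular_append_iff, isWeaklyRegular_singleton_iff,
      smul_eq_mul, mul_top, ofList_append] at hreg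
    rw [ofList_append, ofList_singleton]
    exact inf_sup_span_singleton_eq_mul (ih hreg.1) hreg.2

end Ideal

theorem stmt3_general (R : Type) [CommRing R] (rs ss : List R)
    (hreg : RingTheory.Sequence.IsWeaklyRegular R (rs ++ ss)) :
    Ideal.span {x | x ∈ rs} ⊓ Ideal.span {x | x ∈ ss} =
      Ideal.span {x | x ∈ rs} * Ideal.span {x | x ∈ ss} :=
  Ideal.ofList_inf_ofList_eq_mul_of_isWeaklyRegular_append hreg

/-- Let `R` be a commutative ring and `(r_1, …, r_k, s_1, …, s_l)` a regular
sequence in `R` (in the sense that for each `i` the image of the next element in the quotient by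
the ideal generated by the previous ones is not a zero-divisor, i.e. a weakly regular sequence)
such that the subsequence `(s_1, …, s_l)` is itself a regular sequence.  Let
`I = (r_1, …, r_k)` and `J = (s_1, …, s_l)`.  Then `I ∩ J = I·J`. -/
theorem stmt3 (R : Type) [CommRing R] (rs ss : List R)
    (hreg : RingTheory.Sequence.IsWeaklyRegular R (rs ++ ss))
    (hss : RingTheory.Sequence.IsWeaklyRegular R ss) :
    Ideal.span {x | x ∈ rs} ⊓ Ideal.span {x | x ∈ ss} =
      Ideal.span {x | x ∈ rs} * Ideal.span {x | x ∈ ss} :=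
  stmt3_general R rs ss hreg
end

section
/- Let R be a commutative Noetherian local ring with maximal ideal 𝔪 and finite residue field, and let M be a finitely generated R-module. Then the submodule Γ(M) = { x ∈ M | 𝔪^k · x = 0 for some k ≥ 0 } is a finite set, and every R-submodule of M that is finite as a set is contained in Γ(M); that is, Γ(M) is the maximal finite submodule of M. -/
/-!
`Γ(M)` (`Ideal.primaryComponent M 𝔪`) is the union of the increasing chain of `𝔪^k`-torsion
submodules, which stabilizes because `M` is Noetherian; its stable term is finitely generated
over the finite ring `R ⧸ 𝔪^n`. Conversely, in a finite submodule `N` the decreasing chain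
`𝔪^k N` stabilizes, and Nakayama's lemma forces the stable term to vanish.
-/

open Submodule IsLocalRing

theorem Module.IsTorsionBySet.finite {R M : Type*} [CommRing R] [AddCommGroup M] [Module R M]
    [Module.Finite R M] {I : Ideal R} [Finite (R ⧸ I)] (hM : Module.IsTorsionBySet R M I) :
    Finite M := by
  let := hM.module
  have : Module.Finite (R ⧸ I) M := Module.Finite.of_restrictScalars_finite R _ _
  exact Module.finite_of_finite (R ⧸ I)

theorem IsArtinian.exists_pow_smul_top_eq_bot {R M : Type*} [CommRing R] [AddCommGroup M]
    [Module R M] [IsArtinian R M] [IsNoetherian R M] {I : Ideal R}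
    (hI : I ≤ (⊥ : Ideal R).jacobson) : ∃ k, I ^ k • (⊤ : Submodule R M) = ⊥ := by
  obtain ⟨n, hn⟩ := IsArtinian.monotone_stabilizes (R := R) (M := M)
    ⟨fun k => OrderDual.toDual (I ^ k • ⊤),
      fun _ _ h => Submodule.smul_mono_left (Ideal.pow_le_pow_right h)⟩
  refine ⟨n, eq_bot_of_le_smul_of_le_jacobson_bot I _ (IsNoetherian.noetherian _) ?_ hI⟩
  rw [← Submodule.smul_assoc, smul_eq_mul, ← pow_succ']
  exact le_of_eq (hn (n + 1) n.le_succ)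

namespace Ideal

variable {R M : Type*} [CommRing R] [AddCommGroup M] [Module R M]

theorem exists_primaryComponent_eq_torsionBySet_pow [IsNoetherian R M] (I : Ideal R) :
    ∃ n, primaryComponent M I = torsionBySet R M ↑(I ^ n) :=
  (IsNoetherian.noetherian _).stabilizes_of_iSup_eq
    ⟨fun n => torsionBySet R M ↑(I ^ n), fun _ _ h => torsionBySet_le_torsionBySet_pow _ _ h I⟩ rfl

theorem le_primaryComponent_of_finite {I : Ideal R} (hI : I ≤ (⊥ : Ideal R).jacobson)
    {N : Submodule R M} (hN : (N : Set M).Finite) : N ≤ primaryComponent M I := by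
  have : Finite N := hN
  have := isArtinian_of_finite (R := R) (M := N)
  obtain ⟨k, hk⟩ := IsArtinian.exists_pow_smul_top_eq_bot (M := N) hI
  intro x hx
  refine (primaryComponent_mem M I x).2 ⟨k, (mem_torsionBySet_iff _ _).2 fun ⟨a, ha⟩ => ?_⟩
  have := smul_mem_smul ha (mem_top : (⟨x, hx⟩ : N) ∈ ⊤)
  rw [hk, Submodule.mem_bot] at this
  exact congrArg Subtype.val this

end Ideal

theorem IsLocalRing.finite_primaryComponent_maximalIdeal (R M : Type*) [CommRing R]
    [IsNoetherianRing R] [IsLocalRing R] [Finite (ResidueField R)] [AddCommGroup M] [Module R M]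
    [Module.Finite R M] : Finite (Ideal.primaryComponent M (maximalIdeal R)) := by
  obtain ⟨n, hn⟩ := (maximalIdeal R).exists_primaryComponent_eq_torsionBySet_pow (M := M)
  have : Finite (R ⧸ maximalIdeal R ^ n) := finite_quotient_iff.2 ⟨n, le_rfl⟩
  rw [hn]
  exact (torsionBySet_isTorsionBySet _).finite

/-- Let `R` be a commutative Noetherian local ring with maximal ideal `𝔪` and
finite residue field, and `M` a finitely generated `R`-module.  Then the set
`Γ(M) = {x ∈ M | 𝔪^k • x = 0 for some k}` is finite, and every finite `R`-submodule of `M` is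
contained in `Γ(M)`; i.e. `Γ(M)` is the maximal finite submodule of `M`. -/
theorem stmt8 (R : Type) [CommRing R] [IsNoetherianRing R] [IsLocalRing R]
    [Finite (IsLocalRing.ResidueField R)]
    (M : Type) [AddCommGroup M] [Module R M] [Module.Finite R M] :
    {x : M | ∃ k : ℕ, ∀ a ∈ IsLocalRing.maximalIdeal R ^ k, a • x = 0}.Finite ∧
      ∀ N : Submodule R M, (N : Set M).Finite →
        (N : Set M) ⊆ {x : M | ∃ k : ℕ, ∀ a ∈ IsLocalRing.maximalIdeal R ^ k, a • x = 0} := by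
  have hΓ : {x : M | ∃ k : ℕ, ∀ a ∈ maximalIdeal R ^ k, a • x = 0} =
      Ideal.primaryComponent M (maximalIdeal R) := by
    ext x
    simp [Ideal.primaryComponent_mem, mem_torsionBySet_iff]
  rw [hΓ]
  have := finite_primaryComponent_maximalIdeal R M
  exact ⟨Set.toFinite _,
    fun _ hN => Ideal.le_primaryComponent_of_finite (maximalIdeal_le_jacobson ⊥) hN⟩
end

section
/- Let R be a commutative Noetherian local ring with maximal ideal 𝔪 which is 𝔪-adically complete and has finite residue field. Let E be the R-module of additive group homomorphisms f : R → ℚ/ℤ such that f vanishes on 𝔪^k for some k, with R-action (r·f)(x) = f(rx). Then E is an injective R-module. -/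
open IsLocalRing

/-- The additive group `ℚ/ℤ`: the quotient of the additive group of the rationals by the
subgroup of integers (the integer multiples of `1`). -/
abbrev QmodZ : Type := ℚ ⧸ AddSubgroup.zmultiples (1 : ℚ)

/-- The subgroup of `Hom_ℤ(R, ℚ/ℤ)` consisting of the additive homomorphisms `f : R → ℚ/ℤ`
vanishing on `𝔪^k` for some `k`, where `𝔪` is the maximal ideal of the local ring `R`. -/
def matlisSub (R : Type) [CommRing R] [IsLocalRing R] : AddSubgroup (R →+ QmodZ) where
  carrier := {f | ∃ k : ℕ, ∀ x ∈ maximalIdeal R ^ k, f x = 0}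
  zero_mem' := ⟨0, fun x _ => rfl⟩
  add_mem' := by
    rintro f g ⟨k, hk⟩ ⟨l, hl⟩
    refine ⟨k + l, fun x hx => ?_⟩
    rw [AddMonoidHom.add_apply, hk x (Ideal.pow_le_pow_right (Nat.le_add_right k l) hx),
      hl x (Ideal.pow_le_pow_right (Nat.le_add_left l k) hx), add_zero]
  neg_mem' := by
    rintro f ⟨k, hk⟩
    exact ⟨k, fun x hx => by rw [AddMonoidHom.neg_apply, hk x hx, neg_zero]⟩

/-- The type `E` of additive homomorphisms `f : R → ℚ/ℤ` vanishing on a power of the maximal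
ideal. -/
abbrev MatlisE (R : Type) [CommRing R] [IsLocalRing R] : Type := ↥(matlisSub R)

/-- The `R`-module structure on `E` given by `(r · f)(x) = f (r x)`. -/
instance matlisModule (R : Type) [CommRing R] [IsLocalRing R] : Module R (MatlisE R) where
  smul r f := ⟨(f : R →+ QmodZ).comp (AddMonoidHom.mulLeft r), by
    obtain ⟨k, hk⟩ := f.2
    exact ⟨k, fun x hx => hk _ (Ideal.mul_mem_left _ r hx)⟩⟩
  one_smul f := Subtype.ext (AddMonoidHom.ext fun x => by
    show (f : R →+ QmodZ) (1 * x) = (f : R →+ QmodZ) x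
    rw [one_mul])
  mul_smul r s f := Subtype.ext (AddMonoidHom.ext fun x => by
    show (f : R →+ QmodZ) ((r * s) * x) = (f : R →+ QmodZ) (s * (r * x))
    rw [← mul_assoc, mul_comm r s])
  smul_zero r := Subtype.ext (AddMonoidHom.ext fun x => rfl)
  smul_add r f g := Subtype.ext (AddMonoidHom.ext fun x => rfl)
  add_smul r s f := Subtype.ext (AddMonoidHom.ext fun x => by
    show (f : R →+ QmodZ) ((r + s) * x) =
      (f : R →+ QmodZ) (r * x) + (f : R →+ QmodZ) (s * x)
    rw [add_mul, map_add])
  zero_smul f := Subtype.ext (AddMonoidHom.ext fun x => by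
    show (f : R →+ QmodZ) (0 * x) = 0
    rw [zero_mul, map_zero])

/-!
Baer's criterion reduces the claim to extending a linear map `φ : I → E` from an ideal `I`.
Since `I` is finitely generated, all `φ x` vanish on a common power `𝔪^k`, so the character
`g x := φ x 1` of `I` vanishes on `𝔪^k I`, and by Artin–Rees on `I ∩ 𝔪^n` for some `n`. Thus
`g` factors through `I / (I ∩ 𝔪^n) ⊆ R / 𝔪^n`, extends to `R / 𝔪^n` because `ℚ/ℤ` is divisible,
and the extension is an element `e ∈ E` with `φ x = x • e` on `I`.
-/

theorem Submodule.FG.exists_le_of_directed {R M ι : Type*} [Semiring R] [AddCommMonoid M]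
    [Module R M] [Nonempty ι] {N : Submodule R M} (hN : N.FG) {f : ι → Submodule R M}
    (hf : Directed (· ≤ ·) f) (hle : N ≤ ⨆ i, f i) : ∃ i, N ≤ f i := by
  obtain ⟨_, ⟨i, rfl⟩, hi⟩ :=
    (CompleteLattice.isCompactElement_iff_le_of_directed_sSup_le (α := Submodule R M) N).1
      ((Submodule.fg_iff_compact N).1 hN) (Set.range f) (Set.range_nonempty f)
      hf.directedOn_range (by rwa [sSup_range])
  exact ⟨i, hi⟩

theorem Ideal.exists_pow_smul_top_inf_le_pow_smul {R M : Type*} [CommRing R] [AddCommGroup M]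
    [Module R M] [IsNoetherianRing R] [Module.Finite R M] (I : Ideal R) (N : Submodule R M)
    (k : ℕ) : ∃ n, I ^ n • ⊤ ⊓ N ≤ I ^ k • N := by
  obtain ⟨c, hc⟩ := I.exists_pow_inf_eq_pow_smul N
  refine ⟨c + k, ?_⟩
  rw [hc (c + k) (Nat.le_add_right c k), Nat.add_sub_cancel_left]
  exact Submodule.smul_mono le_rfl inf_le_right

theorem QmodZ.exists_comp_eq_of_ker_le {A B : Type} [AddCommGroup A] [AddCommGroup B]
    (f : A →+ B) (g : A →+ QmodZ) (hker : f.ker ≤ g.ker) : ∃ G : B →+ QmodZ, G.comp f = g := by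
  obtain ⟨G, hG⟩ := (Module.Baer.of_divisible (AddCircle (1 : ℚ))).extension_property_addMonoidHom
    (QuotientAddGroup.kerLift f) (QuotientAddGroup.kerLift_injective f)
    (QuotientAddGroup.lift f.ker g hker)
  exact ⟨G, AddMonoidHom.ext fun a => congr($hG (a : A ⧸ f.ker))⟩

namespace MatlisE

variable {R : Type} [CommRing R] [IsLocalRing R]

@[ext]
theorem ext {f g : MatlisE R} (h : ∀ x, (f : R →+ QmodZ) x = (g : R →+ QmodZ) x) : f = g :=
  Subtype.ext (AddMonoidHom.ext h)

@[simp]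
theorem smul_apply (r : R) (f : MatlisE R) (x : R) :
    ((r • f : MatlisE R) : R →+ QmodZ) x = (f : R →+ QmodZ) (r * x) :=
  rfl

theorem map_smul_apply_one {M : Type*} [AddCommGroup M] [Module R M] (φ : M →ₗ[R] MatlisE R)
    (r : R) (x : M) : (φ (r • x) : R →+ QmodZ) 1 = (φ x : R →+ QmodZ) r := by
  rw [map_smul, smul_apply, mul_one]

variable (R) in
def vanishingOnPow (k : ℕ) : Submodule R (MatlisE R) where
  carrier := {f | ∀ x ∈ maximalIdeal R ^ k, (f : R →+ QmodZ) x = 0}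
  zero_mem' _ _ := rfl
  add_mem' hf hg x hx := by
    rw [AddSubgroup.coe_add, AddMonoidHom.add_apply, hf x hx, hg x hx, add_zero]
  smul_mem' r _ hf x hx := hf _ (Ideal.mul_mem_left _ r hx)

theorem vanishingOnPow_mono : Monotone (vanishingOnPow R) :=
  fun _ _ hkl _ hf x hx => hf x (Ideal.pow_le_pow_right hkl hx)

theorem iSup_vanishingOnPow : ⨆ k, vanishingOnPow R k = ⊤ :=
  eq_top_iff.2 fun f _ => let ⟨k, hk⟩ := f.2; Submodule.mem_iSup_of_mem k hk

theorem exists_range_le_vanishingOnPow {M : Type*} [AddCommGroup M] [Module R M]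
    [Module.Finite R M] (φ : M →ₗ[R] MatlisE R) : ∃ k, LinearMap.range φ ≤ vanishingOnPow R k :=
  LinearMap.range_eq_map φ ▸ (Module.Finite.fg_top.map φ).exists_le_of_directed
    vanishingOnPow_mono.directed_le (by rw [iSup_vanishingOnPow]; exact le_top)

theorem apply_one_eq_zero_of_mem_pow_smul_top {M : Type*} [AddCommGroup M] [Module R M]
    {φ : M →ₗ[R] MatlisE R} {k : ℕ} (hφ : LinearMap.range φ ≤ vanishingOnPow R k) {x : M}
    (hx : x ∈ maximalIdeal R ^ k • (⊤ : Submodule R M)) : (φ x : R →+ QmodZ) 1 = 0 := by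
  refine Submodule.smul_induction_on hx (fun r hr y _ => ?_) fun y z hy hz => ?_
  · rw [map_smul_apply_one]
    exact hφ ⟨y, rfl⟩ r hr
  · rw [map_add, AddSubgroup.coe_add, AddMonoidHom.add_apply, hy, hz, add_zero]

theorem baer [IsNoetherianRing R] : Module.Baer R (MatlisE R) := by
  intro I φ
  obtain ⟨k, hk⟩ := exists_range_le_vanishingOnPow φ
  obtain ⟨n, hn⟩ := (maximalIdeal R).exists_pow_smul_top_inf_le_pow_smul (I : Submodule R R) k
  let g : I →+ QmodZ :=
    { toFun x := (φ x : R →+ QmodZ) 1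
      map_zero' := by rw [map_zero]; rfl
      map_add' x y := by rw [map_add]; rfl }
  let f : I →+ R ⧸ maximalIdeal R ^ n :=
    (Ideal.Quotient.mk _).toAddMonoidHom.comp I.subtype.toAddMonoidHom
  have hker : f.ker ≤ g.ker := fun x hx => by
    have hxn : (x : R) ∈ maximalIdeal R ^ n • (⊤ : Ideal R) := by
      rw [Ideal.smul_eq_mul, Ideal.mul_top]
      exact Ideal.Quotient.eq_zero_iff_mem.1 hx
    exact apply_one_eq_zero_of_mem_pow_smul_top hk
      ((Submodule.mem_smul_top_iff _ _ _).2 (hn ⟨hxn, x.2⟩))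
  obtain ⟨G, hG⟩ := QmodZ.exists_comp_eq_of_ker_le f g hker
  let e : MatlisE R := ⟨G.comp (Ideal.Quotient.mk _).toAddMonoidHom, n, fun x hx => by
    rw [AddMonoidHom.comp_apply, RingHom.toAddMonoidHom_eq_coe, AddMonoidHom.coe_coe,
      Ideal.Quotient.eq_zero_iff_mem.2 hx, map_zero]⟩
  refine ⟨LinearMap.toSpanSingleton R _ e, fun x hx => MatlisE.ext fun y => ?_⟩
  have hxy : (⟨x * y, I.mul_mem_right y hx⟩ : I) = y • ⟨x, hx⟩ := Subtype.ext (mul_comm x y)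
  calc ((LinearMap.toSpanSingleton R _ e x : MatlisE R) : R →+ QmodZ) y
      = G (f ⟨x * y, I.mul_mem_right y hx⟩) := rfl
    _ = (φ (y • ⟨x, hx⟩) : R →+ QmodZ) 1 := by rw [← AddMonoidHom.comp_apply, hG, ← hxy]; rfl
    _ = (φ ⟨x, hx⟩ : R →+ QmodZ) y := map_smul_apply_one φ y _

end MatlisE

theorem stmt12_general (R : Type) [CommRing R] [IsLocalRing R] [IsNoetherianRing R] :
    Module.Injective R (MatlisE R) :=
  MatlisE.baer.injective

/-- Let `R` be a commutative Noetherian local ring with maximal ideal `𝔪`,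
`𝔪`-adically complete and with finite residue field.  Then the `R`-module `E` of additive
homomorphisms `f : R → ℚ/ℤ` vanishing on some power of `𝔪`, with the action
`(r · f)(x) = f (r x)`, is an injective `R`-module. -/
theorem stmt12 (R : Type) [CommRing R] [IsLocalRing R] [IsNoetherianRing R]
    [IsAdicComplete (maximalIdeal R) R] [Finite (ResidueField R)] :
    Module.Injective R (MatlisE R) :=
  stmt12_general R
end

section
/- Let R be a commutative Noetherian local ring with maximal ideal 𝔪 which is 𝔪-adically complete and has finite residue field. Let E be the R-module of additive group homomorphisms f : R → ℚ/ℤ such that f vanishes on 𝔪^k for some k, with R-action (r·f)(x) = f(rx). Then the submodule E_0 = { f ∈ E | f vanishes on 𝔪 } is an essential submodule of E: every nonzero R-submodule H of E contains a nonzero element f with f vanishing on 𝔪. -/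
open IsLocalRing

theorem Ideal.exists_apply_ne_zero_and_apply_mul_eq_zero {R M : Type*} [CommSemiring R] [Zero M]
    (I : Ideal R) {f : R → M} {a : R} (ha : f a ≠ 0) {k : ℕ} (hk : ∀ x ∈ I ^ k, f x = 0) :
    ∃ x, f x ≠ 0 ∧ ∀ y ∈ I, f (x * y) = 0 := by
  induction k with
  | zero => exact absurd (hk a (by simp)) ha
  | succ k ih =>
    by_cases hvanish : ∀ x ∈ I ^ k, f x = 0
    · exact ih hvanish
    · push Not at hvanish
      obtain ⟨x, hxI, hx⟩ := hvanish
      exact ⟨x, hx, fun y hy => hk _ (pow_succ I k ▸ Ideal.mul_mem_mul hxI hy)⟩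

theorem matlisE_smul_apply {R : Type} [CommRing R] [IsLocalRing R] (r : R) (f : MatlisE R)
    (x : R) : ((r • f : MatlisE R) : R →+ QmodZ) x = (f : R →+ QmodZ) (r * x) :=
  rfl

theorem stmt13_general (R : Type) [CommRing R] [IsLocalRing R] :
    ∀ H : Submodule R (MatlisE R), H ≠ ⊥ →
      ∃ f ∈ H, f ≠ 0 ∧ ∀ x ∈ maximalIdeal R, (f : R →+ QmodZ) x = 0 := by
  intro H hH
  obtain ⟨f, hfH, hf0⟩ := (Submodule.ne_bot_iff H).mp hH
  obtain ⟨k, hk⟩ := f.2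
  obtain ⟨a, ha⟩ : ∃ a, (f : R →+ QmodZ) a ≠ 0 := by
    by_contra! h
    exact hf0 (Subtype.ext (AddMonoidHom.ext h))
  obtain ⟨x, hx, hxm⟩ :=
    (maximalIdeal R).exists_apply_ne_zero_and_apply_mul_eq_zero ha hk
  refine ⟨x • f, H.smul_mem x hfH, fun hxf => hx ?_, hxm⟩
  simpa [matlisE_smul_apply] using congrArg (fun g : MatlisE R => (g : R →+ QmodZ) 1) hxf

/-- Let `R` be a commutative Noetherian local ring with maximal ideal `𝔪`,
`𝔪`-adically complete and with finite residue field, and let `E` be the `R`-module of additive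
homomorphisms `f : R → ℚ/ℤ` vanishing on some power of `𝔪` (with action `(r·f)(x) = f(rx)`).
Then the submodule `E₀ = {f ∈ E | f` vanishes on `𝔪}` is essential in `E`: every nonzero
`R`-submodule `H` of `E` contains a nonzero element `f` vanishing on `𝔪`. -/
theorem stmt13 (R : Type) [CommRing R] [IsLocalRing R] [IsNoetherianRing R]
    [IsAdicComplete (maximalIdeal R) R] [Finite (ResidueField R)] :
    ∀ H : Submodule R (MatlisE R), H ≠ ⊥ →
      ∃ f ∈ H, f ≠ 0 ∧ ∀ x ∈ maximalIdeal R, (f : R →+ QmodZ) x = 0 :=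
  stmt13_general R
end
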